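/- Let X be a normal Hausdorff space. The following are equivalent: (1) MC(X) with the upper Vietoris topology τ_V⁺ is separable; (2) (MC(X), τ_V⁺) satisfies the countable chain condition (every pairwise disjoint family of nonempty open sets is countable); (3) X is compact and metrizable. -/

import Mathlib

open Set Topology TopologicalSpace

/-- The set of values of a set-valued map (identified with its graph) at a point. -/
def valuesAt {X : Type*} (F : Set (X × ℝ)) (x : X) : Set ℝ := {y | (x, y) ∈ F}

/-- A set-valued map (identified with its graph) is cusco: upper semicontinuous at every
point, with nonempty compact convex values. -/
def IsCusco {X : Type*} [TopologicalSpace X] (F : Set (X × ℝ)) : Prop :=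
  (∀ x : X, ∀ V : Set ℝ, IsOpen V → valuesAt F x ⊆ V →
    ∃ U : Set X, IsOpen U ∧ x ∈ U ∧ ∀ u ∈ U, valuesAt F u ⊆ V) ∧
  (∀ x : X, (valuesAt F x).Nonempty ∧ IsCompact (valuesAt F x) ∧ Convex ℝ (valuesAt F x))

/-- A minimal cusco map, i.e. a cusco map containing no proper cusco submap. -/
def IsMinimalCusco {X : Type*} [TopologicalSpace X] (F : Set (X × ℝ)) : Prop :=
  IsCusco F ∧ ∀ G : Set (X × ℝ), IsCusco G → G ⊆ F → G = F

/-- `L(X)`: all cusco maps from `X` to `ℝ`. -/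
def LSet (X : Type*) [TopologicalSpace X] : Set (Set (X × ℝ)) := {F | IsCusco F}

/-- `L₀(X)`: cusco maps that are single-valued at each isolated point. -/
def L0Set (X : Type*) [TopologicalSpace X] : Set (Set (X × ℝ)) :=
  {F | IsCusco F ∧ ∀ x : X, IsOpen ({x} : Set X) → ∃ y : ℝ, valuesAt F x = {y}}

/-- `MC(X)`: all minimal cusco maps from `X` to `ℝ`. -/
def MCSet (X : Type*) [TopologicalSpace X] : Set (Set (X × ℝ)) := {F | IsMinimalCusco F}

/-- The upper Vietoris topology on a family of subsets of `X × ℝ`. -/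
def upperVietoris {X : Type*} [TopologicalSpace X] (S : Set (Set (X × ℝ))) :
    TopologicalSpace S :=
  .generateFrom {U | ∃ W : Set (X × ℝ), IsOpen W ∧ U = {A : S | (A : Set (X × ℝ)) ⊆ W}}

/-- The Vietoris topology on a family of subsets of `X × ℝ`. -/
def vietoris {X : Type*} [TopologicalSpace X] (S : Set (Set (X × ℝ))) :
    TopologicalSpace S :=
  .generateFrom
    ({U | ∃ W : Set (X × ℝ), IsOpen W ∧ U = {A : S | (A : Set (X × ℝ)) ⊆ W}} ∪
     {U | ∃ W : Set (X × ℝ), IsOpen W ∧ U = {A : S | ((A : Set (X × ℝ)) ∩ W).Nonempty}})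

/-- The graph of a function `X → ℝ`. -/
def graphOf {X : Type*} (f : X → ℝ) : Set (X × ℝ) := {p | p.2 = f p.1}

/-- `X` is countably compact: every countable open cover has a finite subcover. -/
def CountablyCompact (X : Type*) [TopologicalSpace X] : Prop :=
  ∀ U : ℕ → Set X, (∀ n, IsOpen (U n)) → (⋃ n, U n) = Set.univ →
    ∃ t : Finset ℕ, (⋃ n ∈ t, U n) = Set.univ

/-- A topology satisfies the countable chain condition if every pairwise disjoint
family of nonempty open sets is countable. -/
def HasCCC {Y : Type*} (t : TopologicalSpace Y) : Prop :=
  ∀ 𝒞 : Set (Set Y), (∀ U ∈ 𝒞, IsOpen[t] U ∧ U.Nonempty) → 𝒞.PairwiseDisjoint id →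
    𝒞.Countable

/-!
Graphs of continuous functions are minimal cusco maps, and the maps lying inside a tube
`{(x, y) | |y - f x| < r}` form a `τ_V⁺`-open set. Tubes of radius `ε / 2` around the members of
an `ε`-separated family in `C_b(X)` give pairwise disjoint open sets, so the countable chain
condition makes `C_b(X)` separable. A separable `C_b(X)` makes `X` second countable, and it makes
a normal `X` countably compact: an infinite closed discrete set `B` would carry, by Tietze, the
`1`-separated family of extensions of the indicators of all subsets of `B`. Being Lindelöf, `X`
is then compact, and it is metrizable by Urysohn.

Conversely, on a paracompact normal `X` a partition of unity places the graph of a continuous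
function inside any open `W` containing a cusco map, so for compact metrizable `X` the graphs of
a countable dense subset of `C(X, ℝ)` are dense in `(MC(X), τ_V⁺)`.
-/

open scoped NNReal BoundedContinuousFunction

lemma convex_setOf_forall_uIcc_subset (S V : Set ℝ) :
    Convex ℝ {c : ℝ | ∀ z ∈ S, uIcc c z ⊆ V} := by
  refine convex_iff_ordConnected.2 ⟨fun c₁ h₁ c₂ h₂ c hc z hz => ?_⟩
  rcases uIcc_subset_uIcc_union_uIcc (Icc_subset_uIcc hc) with h | h
  · exact (uIcc_subset_uIcc_right h).trans (h₁ z hz)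
  · have h₂' := h₂ z hz
    rw [uIcc_comm] at h₂' ⊢
    exact (uIcc_subset_uIcc_left h).trans h₂'

section Cusco

variable {X : Type*}

lemma graphOf_subset_iff {f : X → ℝ} {W : Set (X × ℝ)} :
    graphOf f ⊆ W ↔ ∀ x, (x, f x) ∈ W :=
  ⟨fun h x => h rfl, by rintro h ⟨x, y⟩ (rfl : y = f x); exact h x⟩

lemma valuesAt_graphOf (f : X → ℝ) (x : X) : valuesAt (graphOf f) x = {f x} := rfl

variable [TopologicalSpace X]

lemma isCusco_graphOf {f : X → ℝ} (hf : Continuous f) : IsCusco (graphOf f) := by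
  refine ⟨fun x V hV hfV => ⟨f ⁻¹' V, hV.preimage hf, hfV rfl, fun u hu => ?_⟩, fun x => ?_⟩
  · simpa [valuesAt_graphOf] using hu
  · rw [valuesAt_graphOf]
    exact ⟨singleton_nonempty _, isCompact_singleton, convex_singleton _⟩

lemma isMinimalCusco_graphOf {f : X → ℝ} (hf : Continuous f) : IsMinimalCusco (graphOf f) := by
  refine ⟨isCusco_graphOf hf, fun G hG hGf => hGf.antisymm ?_⟩
  rintro ⟨x, y⟩ (rfl : y = f x)
  obtain ⟨z, hz⟩ := (hG.2 x).1
  obtain rfl : z = f x := hGf hz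
  exact hz

lemma IsCusco.eventually_uIcc_subset {F W : Set (X × ℝ)} (hF : IsCusco F) (hW : IsOpen W)
    (hFW : F ⊆ W) {x : X} {c : ℝ} (hc : c ∈ valuesAt F x) :
    ∀ᶠ y in 𝓝 x, ∀ z ∈ valuesAt F y, uIcc c z ⊆ valuesAt W y := by
  obtain ⟨-, hcpt, hconv⟩ := hF.2 x
  obtain ⟨U, V, hU, hV, hxU, hFV, hUVW⟩ := generalized_tube_lemma isCompact_singleton hcpt hW
    (by rintro ⟨_, t⟩ ⟨rfl, ht⟩; exact hFW ht)
  -- upper semicontinuity is applied to a convex thickening of `F x`, which contains the segments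
  obtain ⟨δ, hδ, hδV⟩ := hcpt.exists_thickening_subset_open hV hFV
  obtain ⟨U', hU', hxU', hFU'⟩ :=
    hF.1 x _ Metric.isOpen_thickening (Metric.self_subset_thickening hδ _)
  filter_upwards [hU.mem_nhds (hxU rfl), hU'.mem_nhds hxU'] with y hyU hyU' z hz t ht
  have hsegment := (hconv.thickening δ).ordConnected.uIcc_subset
    (Metric.self_subset_thickening hδ _ hc) (hFU' y hyU' hz)
  exact hUVW ⟨hyU, hδV (hsegment ht)⟩

theorem IsCusco.exists_continuousMap_forall_mem [NormalSpace X] [ParacompactSpace X]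
    {F W : Set (X × ℝ)} (hF : IsCusco F) (hW : IsOpen W) (hFW : F ⊆ W) :
    ∃ g : C(X, ℝ), ∀ x, (x, g x) ∈ W := by
  -- `{c | (y, c) ∈ W}` need not be convex, but the values whose segments to `F y` lie in it are
  obtain ⟨g, hg⟩ := exists_continuous_forall_mem_convex_of_local_const
    (t := fun y => {c : ℝ | ∀ z ∈ valuesAt F y, uIcc c z ⊆ valuesAt W y})
    (fun y => convex_setOf_forall_uIcc_subset _ _)
    fun x => (hF.2 x).1.imp fun _ hc => hF.eventually_uIcc_subset hW hFW hc
  refine ⟨g, fun x => ?_⟩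
  obtain ⟨z, hz⟩ := (hF.2 x).1
  exact hg x z hz left_mem_uIcc

end Cusco

lemma hasCCC_of_separableSpace {Y : Type*} [t : TopologicalSpace Y] [SeparableSpace Y] :
    HasCCC t :=
  fun _ h hd => hd.countable_of_isOpen (fun U hU => (h U hU).1) fun U hU => (h U hU).2

lemma HasCCC.countable_of_pairwiseDisjoint {Y ι : Type*} {t : TopologicalSpace Y} (h : HasCCC t)
    {a : Set ι} {U : ι → Set Y} (hd : a.PairwiseDisjoint U) (ho : ∀ i ∈ a, IsOpen[t] (U i))
    (hne : ∀ i ∈ a, (U i).Nonempty) : a.Countable := by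
  have hinj : a.InjOn U := fun i hi j hj hij =>
    let ⟨y, hy⟩ := hne i hi
    hd.elim_set hi hj y hy (hij ▸ hy)
  refine countable_of_injective_of_countable_image hinj (h _ ?_ (hinj.pairwiseDisjoint_image.2 hd))
  rintro _ ⟨i, hi, rfl⟩
  exact ⟨ho i hi, hne i hi⟩

lemma secondCountableTopology_of_forall_isSeparated_countable {Y : Type*} [PseudoEMetricSpace Y]
    (h : ∀ ε : ℝ≥0, ε ≠ 0 → ∀ s : Set Y, Metric.IsSeparated ε s → s.Countable) :
    SecondCountableTopology Y := by
  refine EMetric.secondCountable_of_almost_dense_set fun ε hε => ?_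
  obtain ⟨δ, hδ, hδε⟩ := ENNReal.lt_iff_exists_nnreal_btwn.1 hε
  obtain ⟨N, hN⟩ : ∃ N : Set Y, Maximal (fun N => N ⊆ univ ∧ Metric.IsSeparated δ N) N := by
    refine zorn_subset _ fun c hc hchain =>
      ⟨⋃₀ c, ⟨subset_univ _, ?_⟩, fun _ => subset_sUnion_of_mem⟩
    exact (pairwise_sUnion hchain.directedOn).2 fun s hs => (hc hs).2
  refine ⟨N, h δ (by exact_mod_cast hδ.ne') N hN.1.2, eq_univ_of_forall fun y => ?_⟩
  obtain ⟨z, hz, hyz⟩ := Metric.IsCover.of_maximal_isSeparated hN (mem_univ y)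
  exact mem_iUnion₂.2 ⟨z, hz, le_trans hyz hδε.le⟩

section BoundedContinuous

variable {X : Type*} [TopologicalSpace X]

lemma secondCountableTopology_of_separableSpace_boundedContinuousFunction
    [CompletelyRegularSpace X] [SeparableSpace (X →ᵇ ℝ)] : SecondCountableTopology X := by
  obtain ⟨D, hDc, hD⟩ := exists_countable_dense (X →ᵇ ℝ)
  refine (isTopologicalBasis_of_isOpen_of_nhds (s := (fun g : X →ᵇ ℝ => {x | g x < 1 / 2}) '' D)
    ?_ ?_).secondCountableTopology (hDc.image _)
  · rintro _ ⟨g, -, rfl⟩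
    exact isOpen_lt g.continuous continuous_const
  intro x U hxU hU
  obtain ⟨f, hf, hfx, hfU⟩ := completelyRegularSpace_iff_isOpen.1 ‹_› x U hU hxU
  let fb : X →ᵇ ℝ := (BoundedContinuousFunction.mkOfCompact
    ⟨((↑) : unitInterval → ℝ), continuous_subtype_val⟩).compContinuous ⟨f, hf⟩
  obtain ⟨g, hgD, hfg⟩ := hD.exists_dist_lt fb (by norm_num : (0 : ℝ) < 1 / 2)
  have hclose : ∀ y, |(f y : ℝ) - g y| < 1 / 2 := fun y =>
    (BoundedContinuousFunction.dist_coe_le_dist y).trans_lt hfg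
  refine ⟨_, ⟨g, hgD, rfl⟩, ?_, fun y hy => ?_⟩
  · have := hclose x
    simp only [hfx, Set.Icc.coe_zero, zero_sub, abs_neg] at this
    exact (le_abs_self (g x)).trans_lt this
  · by_contra hyU
    have := hclose y
    simp only [hfU hyU, Pi.one_apply, Set.Icc.coe_one] at this
    have hy : g y < 1 / 2 := hy
    linarith [(abs_lt.1 this).2]

lemma not_separableSpace_boundedContinuousFunction [NormalSpace X] {B : Set X}
    (hBc : IsClosed B) (hBd : IsDiscrete B) (hBi : B.Infinite) : ¬SeparableSpace (X →ᵇ ℝ) := by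
  intro
  have := hBd.to_subtype
  have := hBi.to_subtype
  have hext (T : Set B) : ∃ g : X →ᵇ ℝ, ∀ b : B, g b = T.indicator 1 b := by
    let χ : B →ᵇ ℝ := .mkOfDiscrete (T.indicator 1) 1 fun b b' => by
      simp only [indicator, Pi.one_apply]; split_ifs <;> norm_num
    obtain ⟨g, -, hg⟩ := BoundedContinuousFunction.exists_extension_norm_eq_of_isClosedEmbedding χ
      hBc.isClosedEmbedding_subtypeVal
    exact ⟨g, congrFun hg⟩
  choose g hg using hext
  have hsep : Pairwise fun T T' : Set B => 1 ≤ dist (g T) (g T') := by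
    intro T T' hTT'
    obtain ⟨b, hb⟩ := not_forall.1 (mt Set.ext hTT')
    refine le_trans ?_ (BoundedContinuousFunction.dist_coe_le_dist (b : X))
    rw [hg, hg]
    by_cases hbT : b ∈ T <;> simp_all [indicator]
  have : Uncountable (Set B) := by
    rw [← Cardinal.aleph0_lt_mk_iff, Cardinal.mk_set]
    exact (Cardinal.aleph0_le_mk B).trans_lt (Cardinal.cantor _)
  refine not_countable (Pairwise.countable_of_isOpen_disjoint
    (s := fun T => Metric.ball (g T) (1 / 2))
    (fun T T' h => Metric.ball_disjoint_ball (by linarith [hsep h]))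
    (fun _ => Metric.isOpen_ball) fun T => ⟨g T, Metric.mem_ball_self (by norm_num)⟩)

lemma countablyCompactSpace_of_separableSpace_boundedContinuousFunction [NormalSpace X]
    [T1Space X] [SeparableSpace (X →ᵇ ℝ)] : CountablyCompactSpace X := by
  rw [← isCountablyCompact_univ_iff, isCountablyCompact_iff_infinite_subset_has_accPt]
  by_contra! h
  obtain ⟨B, -, hBi, hB⟩ := h
  obtain ⟨hBc, hBd⟩ := isClosed_and_discrete_iff.2 fun x =>
    disjoint_iff.2 (Filter.not_neBot.1 (hB x (mem_univ x)))
  exact not_separableSpace_boundedContinuousFunction hBc hBd hBi ‹_›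

end BoundedContinuous

section UpperVietoris

variable {X : Type*} [TopologicalSpace X]

attribute [local instance] upperVietoris

lemma isOpen_upperVietoris_setOf_subset (S : Set (Set (X × ℝ))) {W : Set (X × ℝ)}
    (hW : IsOpen W) : IsOpen {A : S | (A : Set (X × ℝ)) ⊆ W} :=
  isOpen_generateFrom_of_mem ⟨W, hW, rfl⟩

lemma isTopologicalBasis_upperVietoris (S : Set (Set (X × ℝ))) :
    IsTopologicalBasis
      {U : Set S | ∃ W : Set (X × ℝ), IsOpen W ∧ U = {A : S | (A : Set (X × ℝ)) ⊆ W}} := by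
  refine isTopologicalBasis_of_subbasis_of_finiteInter rfl ⟨⟨univ, isOpen_univ, by simp⟩, ?_⟩
  rintro _ ⟨W₁, hW₁, rfl⟩ _ ⟨W₂, hW₂, rfl⟩
  exact ⟨W₁ ∩ W₂, hW₁.inter hW₂, by ext; simp [subset_inter_iff]⟩

def MCSet.graph (f : C(X, ℝ)) : MCSet X := ⟨graphOf f, isMinimalCusco_graphOf f.continuous⟩

lemma countable_of_isSeparated_of_hasCCC (hccc : HasCCC (upperVietoris (MCSet X))) {ε : ℝ≥0}
    (hε : ε ≠ 0) {s : Set (X →ᵇ ℝ)} (hs : Metric.IsSeparated ε s) : s.Countable := by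
  let tube (f : X →ᵇ ℝ) : Set (X × ℝ) := {p | dist p.2 (f p.1) < ε / 2}
  have hε' : (0 : ℝ) < ε := by positivity
  refine hccc.countable_of_pairwiseDisjoint (U := fun f => {A : MCSet X | A.1 ⊆ tube f})
    (fun f hf g hg hfg => disjoint_left.2 fun A hAf hAg => ?_)
    (fun f _ => isOpen_upperVietoris_setOf_subset _
      (isOpen_lt (by fun_prop) continuous_const))
    fun f _ => ⟨MCSet.graph f.toContinuousMap, graphOf_subset_iff.2 fun x => by simp [tube, hε']⟩
  have hclose : dist f g ≤ ε := (BoundedContinuousFunction.dist_le hε'.le).2 fun x => by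
    obtain ⟨y, hy⟩ := (A.2.1.2 x).1
    have hyf : dist y (f x) < ε / 2 := hAf hy
    have hyg : dist y (g x) < ε / 2 := hAg hy
    linarith [dist_triangle_left (f x) (g x) y]
  exact (hs hf hg hfg).not_ge (edist_le_coe.2 (by exact_mod_cast hclose))

lemma continuous_MCSet_graph [CompactSpace X] [T2Space X] :
    Continuous (MCSet.graph (X := X)) := by
  have hprod : Continuous fun h : C(X, ℝ) => (ContinuousMap.id X).prodMk h :=
    ContinuousMap.continuous_of_continuous_uncurry _ (continuous_snd.prodMk continuous_eval)
  refine continuous_generateFrom_iff.2 ?_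
  rintro _ ⟨W, hW, rfl⟩
  simpa [MCSet.graph, graphOf_subset_iff, MapsTo] using
    (ContinuousMap.isOpen_setOfPred_mapsTo isCompact_univ hW).preimage hprod

lemma denseRange_MCSet_graph [NormalSpace X] [ParacompactSpace X] :
    DenseRange (MCSet.graph (X := X)) := by
  refine (isTopologicalBasis_upperVietoris _).dense_iff.2 ?_
  rintro _ ⟨W, hW, rfl⟩ ⟨F, hFW⟩
  obtain ⟨g, hg⟩ := F.2.1.exists_continuousMap_forall_mem hW hFW
  exact ⟨MCSet.graph g, graphOf_subset_iff.2 hg, g, rfl⟩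

lemma separableSpace_MCSet [CompactSpace X] [MetrizableSpace X] : SeparableSpace (MCSet X) :=
  denseRange_MCSet_graph.separableSpace continuous_MCSet_graph

end UpperVietoris

/-- For a normal Hausdorff space `X`, the following are equivalent: `(MC(X), τ_V⁺)` is
separable; `(MC(X), τ_V⁺)` satisfies the countable chain condition; `X` is compact and
metrizable. -/
theorem MCSet_upperVietoris_separable_tfae {X : Type*} [TopologicalSpace X] [T2Space X]
    [NormalSpace X] :
    List.TFAE
      [@SeparableSpace _ (upperVietoris (MCSet X)),
       HasCCC (upperVietoris (MCSet X)),
       CompactSpace X ∧ MetrizableSpace X] := by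
  let := upperVietoris (MCSet X)
  have : T4Space X := ⟨⟩
  tfae_have 1 → 2 := fun _ => hasCCC_of_separableSpace
  tfae_have 2 → 3 := fun hccc => by
    have : SecondCountableTopology (X →ᵇ ℝ) :=
      secondCountableTopology_of_forall_isSeparated_countable fun _ hε _ hs =>
        countable_of_isSeparated_of_hasCCC hccc hε hs
    have := secondCountableTopology_of_separableSpace_boundedContinuousFunction (X := X)
    have := countablyCompactSpace_of_separableSpace_boundedContinuousFunction (X := X)
    exact ⟨LindelofSpace.compactSpace, inferInstance⟩
  tfae_have 3 → 1 := fun ⟨_, _⟩ => separableSpace_MCSet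
  tfae_finish
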